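/- Let q, t be real numbers with 0 < q < 1 and t > 0, and let z : ℤ → ℝ be a family with ∑_{i∈ℤ} |z_i| < ∞ and q^2·max(t, t^{−1})·|z_i| < 1 for every i ∈ ℤ. Then the family of positive reals ((((1 + q^{2m}·t·z_i)(1 − q^{2m}·t^{−1}·z_i))/((1 − q^{2m}·t·z_i)(1 + q^{2m}·t^{−1}·z_i)))^m) indexed by pairs (m, i) ∈ ℕ₊ × ℤ is multipliable, and its product equals exp(∑_{k odd, k≥1} (2/k)·((t^k − t^{−k})/(q^k − q^{−k})^2)·(∑_{i∈ℤ} z_i^k)). -/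

import Mathlib

/-!
Write each factor as `exp (m · log ((1+a)(1-b)/((1-a)(1+b))))` with `a = q^{2m} t z_i`,
`b = q^{2m} t⁻¹ z_i`, and expand the logarithm as `∑_n 2/(2n+1) (a^{2n+1} - b^{2n+1})`.
Since `|a|, |b| ≤ q^{2m} max(t, t⁻¹) |z_i|` stays uniformly below `1`, the triple series over
`(m, i, n)` converges absolutely, so it may be summed over `(m, i)` first for fixed odd
`k = 2n+1`: the `i`-sum gives `∑ z_i^k`, and
`∑_m m q^{2km} = q^{2k}/(1-q^{2k})^2 = (q^k - q^{-k})^{-2}`.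
-/

open Real Filter

lemma hasSum_log_div_mul_div {a b : ℝ} (ha : |a| < 1) (hb : |b| < 1) :
    HasSum (fun n : ℕ => 2 * (1 / (2 * n + 1)) * (a ^ (2 * n + 1) - b ^ (2 * n + 1)))
      (log (((1 + a) * (1 - b)) / ((1 - a) * (1 + b)))) := by
  obtain ⟨ha₁, ha₂⟩ := abs_lt.mp ha
  obtain ⟨hb₁, hb₂⟩ := abs_lt.mp hb
  have hlog : log (((1 + a) * (1 - b)) / ((1 - a) * (1 + b))) =
      (log (1 + a) - log (1 - a)) - (log (1 + b) - log (1 - b)) := by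
    rw [log_div (by nlinarith) (by nlinarith), log_mul (by linarith) (by linarith),
      log_mul (by linarith) (by linarith)]
    ring
  rw [hlog]
  simpa only [mul_sub] using (hasSum_log_sub_log_of_abs_lt_one ha).sub
    (hasSum_log_sub_log_of_abs_lt_one hb)

lemma div_mul_div_pos {a b : ℝ} (ha : |a| < 1) (hb : |b| < 1) :
    0 < ((1 + a) * (1 - b)) / ((1 - a) * (1 + b)) := by
  obtain ⟨ha₁, ha₂⟩ := abs_lt.mp ha
  obtain ⟨hb₁, hb₂⟩ := abs_lt.mp hb
  exact div_pos (mul_pos (by linarith) (by linarith)) (mul_pos (by linarith) (by linarith))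

lemma hasSum_pnat_mul_geometric {𝕜 : Type*} [NormedDivisionRing 𝕜] [CompleteSpace 𝕜] {x : 𝕜}
    (hx : ‖x‖ < 1) : HasSum (fun m : ℕ+ => (m : 𝕜) * x ^ (m : ℕ)) (x / (1 - x) ^ 2) :=
  hasSum_pnat_iff (f := fun n : ℕ => (n : 𝕜) * x ^ n) |>.mpr <| by
    simpa using hasSum_coe_mul_geometric_of_norm_lt_one hx

lemma sq_div_one_sub_sq_sq {K : Type*} [Field K] (x : K) :
    x ^ 2 / (1 - x ^ 2) ^ 2 = 1 / (x - x⁻¹) ^ 2 := by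
  rcases eq_or_ne x 0 with rfl | hx
  · simp
  rw [show x - x⁻¹ = (x ^ 2 - 1) / x by field_simp, div_pow, one_div, inv_div]
  ring

lemma tsum_subtype_odd {α : Type*} [AddCommMonoid α] [TopologicalSpace α]
    (f : {k : ℕ // Odd k} → α) :
    ∑' k, f k = ∑' n : ℕ, f ⟨2 * n + 1, odd_two_mul_add_one n⟩ := by
  refine (Function.Injective.tsum_eq ?_ ?_).symm
  · intro m n h
    simp only [Subtype.mk.injEq] at h
    omega
  · rintro ⟨k, n, rfl⟩ -
    exact ⟨n, rfl⟩

lemma exists_mem_Ioo_forall_le_of_tendsto_cofinite {ι : Type*} {f : ι → ℝ} {a b : ℝ}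
    (hf : Tendsto f cofinite (nhds a)) (hab : a < b) (hfb : ∀ i, f i < b) :
    ∃ r ∈ Set.Ioo a b, ∀ i, f i ≤ r := by
  obtain ⟨c, hac, hcb⟩ := exists_between hab
  have hfin : {i | c ≤ f i}.Finite := by
    simpa using eventually_cofinite.mp (hf.eventually (gt_mem_nhds hac))
  rcases {i | c ≤ f i}.eq_empty_or_nonempty with hempty | hne
  · exact ⟨c, ⟨hac, hcb⟩, fun i => le_of_not_ge fun hi => hempty.subset hi⟩
  · obtain ⟨i₀, -, hi₀⟩ := Set.exists_max_image _ f hfin hne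
    refine ⟨max c (f i₀), ⟨lt_max_of_lt_left hac, max_lt hcb (hfb i₀)⟩, fun i => ?_⟩
    rcases le_or_gt c (f i) with hi | hi
    · exact (hi₀ i hi).trans (le_max_right _ _)
    · exact hi.le.trans (le_max_left _ _)

lemma summable_mul_pow_two_mul_add_one {ι : Type*} {w c : ι → ℝ} {r : ℝ} (hw : ∀ i, 0 ≤ w i)
    (hc : ∀ i, 0 ≤ c i) (hcr : ∀ i, c i ≤ r) (hr₀ : 0 ≤ r) (hr₁ : r < 1)
    (hwc : Summable fun i => w i * c i) :
    Summable fun x : ι × ℕ => w x.1 * c x.1 ^ (2 * x.2 + 1) := by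
  refine (hwc.mul_of_nonneg (summable_geometric_of_lt_one (sq_nonneg r) ?_)
    (fun i => mul_nonneg (hw i) (hc i)) fun n => by positivity).of_nonneg_of_le
    (fun x => mul_nonneg (hw x.1) (pow_nonneg (hc x.1) _)) fun ⟨i, n⟩ => ?_
  · exact pow_lt_one₀ hr₀ hr₁ two_ne_zero
  · calc w i * c i ^ (2 * n + 1) = w i * c i * (c i ^ 2) ^ n := by ring
      _ ≤ w i * c i * (r ^ 2) ^ n :=
        mul_le_mul_of_nonneg_left (pow_le_pow_left₀ (sq_nonneg _)
          (pow_le_pow_left₀ (hc i) (hcr i) 2) n) (mul_nonneg (hw i) (hc i))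

lemma abs_pow_mul_mul_le (q : ℝ) {s M : ℝ} (hs : |s| ≤ M) (m : ℕ) (x : ℝ) :
    |q ^ (2 * m) * s * x| ≤ q ^ (2 * m) * M * |x| := by
  have hq := (even_two_mul m).pow_nonneg q
  rw [abs_mul, abs_mul, abs_of_nonneg hq]
  gcongr

lemma pow_two_mul_mul_le {q M : ℝ} (hq : |q| ≤ 1) (hM : 0 ≤ M) {m : ℕ} (hm : m ≠ 0) (x : ℝ) :
    q ^ (2 * m) * M * |x| ≤ q ^ 2 * M * |x| := by
  have hqm : q ^ (2 * m) ≤ q ^ 2 := by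
    rw [pow_mul]
    exact pow_le_of_le_one (sq_nonneg q) (sq_le_one_iff_abs_le_one q |>.mpr hq) hm
  gcongr

lemma abs_pow_mul_mul_lt_one {q s M x : ℝ} (hq : |q| ≤ 1) (hs : |s| ≤ M)
    (hx : q ^ 2 * M * |x| < 1) {m : ℕ} (hm : m ≠ 0) : |q ^ (2 * m) * s * x| < 1 :=
  ((abs_pow_mul_mul_le q hs m x).trans
    (pow_two_mul_mul_le hq ((abs_nonneg s).trans hs) hm x)).trans_lt hx

lemma abs_pow_sub_pow_le_two_mul {a b c : ℝ} (ha : |a| ≤ c) (hb : |b| ≤ c) (k : ℕ) :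
    |a ^ k - b ^ k| ≤ 2 * c ^ k := by
  have hak := pow_le_pow_left₀ (abs_nonneg a) ha k
  have hbk := pow_le_pow_left₀ (abs_nonneg b) hb k
  linarith [abs_sub (a ^ k) (b ^ k), abs_pow a k, abs_pow b k]

lemma abs_le_max_inv_left {t : ℝ} (ht : 0 ≤ t) : |t| ≤ max t t⁻¹ :=
  (abs_of_nonneg ht).trans_le (le_max_left _ _)

lemma abs_inv_le_max_inv {t : ℝ} (ht : 0 ≤ t) : |t⁻¹| ≤ max t t⁻¹ :=
  (abs_of_nonneg (inv_nonneg.mpr ht)).trans_le (le_max_right _ _)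

noncomputable def unknotLogTerm (q t : ℝ) (z : ℤ → ℝ) (m : ℕ+) (i : ℤ) (n : ℕ) : ℝ :=
  m * (2 * (1 / (2 * n + 1)) * ((q ^ (2 * (m : ℕ)) * t * z i) ^ (2 * n + 1) -
    (q ^ (2 * (m : ℕ)) * t⁻¹ * z i) ^ (2 * n + 1)))

section Unknot

variable {q t : ℝ} {z : ℤ → ℝ}

lemma hasSum_unknotLogTerm {m : ℕ+} {i : ℤ} (ha : |q ^ (2 * (m : ℕ)) * t * z i| < 1)
    (hb : |q ^ (2 * (m : ℕ)) * t⁻¹ * z i| < 1) :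
    HasSum (unknotLogTerm q t z m i)
      (log ((((1 + q ^ (2 * (m : ℕ)) * t * z i) * (1 - q ^ (2 * (m : ℕ)) * t⁻¹ * z i)) /
        ((1 - q ^ (2 * (m : ℕ)) * t * z i) * (1 + q ^ (2 * (m : ℕ)) * t⁻¹ * z i))) ^
          (m : ℕ))) := by
  rw [log_pow]
  exact (hasSum_log_div_mul_div ha hb).mul_left _

lemma unknotLogTerm_eq (m : ℕ+) (i : ℤ) (n : ℕ) :
    unknotLogTerm q t z m i n = 2 * (1 / (2 * n + 1)) * (t ^ (2 * n + 1) - t⁻¹ ^ (2 * n + 1)) *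
      z i ^ (2 * n + 1) * ((m : ℝ) * ((q ^ (2 * n + 1)) ^ 2) ^ (m : ℕ)) := by
  rw [unknotLogTerm]
  ring

lemma tsum_unknotLogTerm (hq : |q| < 1) (n : ℕ)
    (hs : Summable fun p : ℕ+ × ℤ => unknotLogTerm q t z p.1 p.2 n) :
    ∑' p : ℕ+ × ℤ, unknotLogTerm q t z p.1 p.2 n =
      2 / ((2 * n + 1 : ℕ) : ℝ) * ((t ^ (2 * n + 1) - t⁻¹ ^ (2 * n + 1)) /
        (q ^ (2 * n + 1) - q⁻¹ ^ (2 * n + 1)) ^ 2) * ∑' i, z i ^ (2 * n + 1) := by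
  have hQ : ‖(q ^ (2 * n + 1)) ^ 2‖ < 1 := by
    rw [norm_pow, norm_pow, Real.norm_eq_abs]
    exact pow_lt_one₀ (by positivity) (pow_lt_one₀ (abs_nonneg q) hq (by omega)) two_ne_zero
  simp_rw [hs.tsum_prod, unknotLogTerm_eq, tsum_mul_right, tsum_mul_left,
    (hasSum_pnat_mul_geometric hQ).tsum_eq, sq_div_one_sub_sq_sq, inv_pow]
  push_cast
  ring

lemma summable_unknotLogTerm (hq : |q| < 1) (ht : 0 < t) (hz : Summable fun i => |z i|)
    (hzq : ∀ i, q ^ 2 * max t t⁻¹ * |z i| < 1) :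
    Summable fun x : (ℕ+ × ℤ) × ℕ => unknotLogTerm q t z x.1.1 x.1.2 x.2 := by
  set M := max t t⁻¹
  have hM : 0 ≤ M := ht.le.trans (le_max_left _ _)
  obtain ⟨r, ⟨hr₀, hr₁⟩, hr⟩ := exists_mem_Ioo_forall_le_of_tendsto_cofinite
    (by simpa using hz.tendsto_cofinite_zero.const_mul (q ^ 2 * M)) zero_lt_one hzq
  have hq2 : ‖q ^ 2‖ < 1 := by
    rw [norm_pow, Real.norm_eq_abs]
    exact pow_lt_one₀ (abs_nonneg q) hq two_ne_zero
  have hwc : Summable fun p : ℕ+ × ℤ => 4 * (p.1 : ℝ) * (q ^ (2 * (p.1 : ℕ)) * M * |z p.2|) :=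
    ((hasSum_pnat_mul_geometric hq2).summable.mul_of_nonneg (hz.mul_left M)
      (fun m => by positivity) fun i => by positivity).mul_left 4 |>.congr fun p => by ring
  have hc : ∀ p : ℕ+ × ℤ, q ^ (2 * (p.1 : ℕ)) * M * |z p.2| ≤ r :=
    fun p => (pow_two_mul_mul_le hq.le hM p.1.ne_zero _).trans (hr p.2)
  have hmaj := summable_mul_pow_two_mul_add_one (w := fun p : ℕ+ × ℤ => 4 * (p.1 : ℝ))
    (c := fun p => q ^ (2 * (p.1 : ℕ)) * M * |z p.2|) (fun p => by positivity)
    (fun p => mul_nonneg (mul_nonneg ((even_two_mul _).pow_nonneg q) hM) (abs_nonneg _))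
    hc hr₀.le hr₁ hwc
  refine hmaj.of_norm_bounded ?_
  rintro ⟨⟨m, i⟩, n⟩
  have hcoeff : 2 * (1 / (2 * (n : ℝ) + 1)) ≤ 2 := by
    have : (1 : ℝ) ≤ 2 * n + 1 := by linarith [n.cast_nonneg (α := ℝ)]
    exact mul_le_of_le_one_right zero_le_two (div_le_one_of_le₀ this (by positivity))
  have hdiff := abs_pow_sub_pow_le_two_mul
    (abs_pow_mul_mul_le q (abs_le_max_inv_left ht.le) m (z i))
    (abs_pow_mul_mul_le q (abs_inv_le_max_inv ht.le) m (z i)) (2 * n + 1)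
  rw [unknotLogTerm, norm_eq_abs, abs_mul, abs_mul, Nat.abs_cast, abs_of_nonneg (by positivity)]
  calc (m : ℝ) * (2 * (1 / (2 * n + 1)) * |_|)
      ≤ m * (2 * (2 * (q ^ (2 * (m : ℕ)) * max t t⁻¹ * |z i|) ^ (2 * n + 1))) := by gcongr
    _ = _ := by ring

lemma hasProd_exp_tsum_unknotLogTerm (hq : |q| < 1) (ht : 0 < t) (hz : Summable fun i => |z i|)
    (hzq : ∀ i, q ^ 2 * max t t⁻¹ * |z i| < 1) :
    HasProd (fun p : ℕ+ × ℤ =>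
      (((1 + q ^ (2 * (p.1 : ℕ)) * t * z p.2) * (1 - q ^ (2 * (p.1 : ℕ)) * t⁻¹ * z p.2)) /
        ((1 - q ^ (2 * (p.1 : ℕ)) * t * z p.2) * (1 + q ^ (2 * (p.1 : ℕ)) * t⁻¹ * z p.2)))
        ^ (p.1 : ℕ))
      (rexp (∑' x : (ℕ+ × ℤ) × ℕ, unknotLogTerm q t z x.1.1 x.1.2 x.2)) := by
  have ha : ∀ p : ℕ+ × ℤ, |q ^ (2 * (p.1 : ℕ)) * t * z p.2| < 1 :=
    fun p => abs_pow_mul_mul_lt_one hq.le (abs_le_max_inv_left ht.le) (hzq p.2) p.1.ne_zero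
  have hb : ∀ p : ℕ+ × ℤ, |q ^ (2 * (p.1 : ℕ)) * t⁻¹ * z p.2| < 1 :=
    fun p => abs_pow_mul_mul_lt_one hq.le (abs_inv_le_max_inv ht.le) (hzq p.2) p.1.ne_zero
  have hfib : ∀ p : ℕ+ × ℤ, HasSum (fun n => unknotLogTerm q t z p.1 p.2 n) _ :=
    fun p => hasSum_unknotLogTerm (ha p) (hb p)
  exact hasProd_of_hasSum_log (fun p => pow_pos (div_mul_div_pos (ha p) (hb p)) _)
    ((summable_unknotLogTerm hq ht hz hzq).hasSum.prod_fiberwise hfib)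

end Unknot

/-- The infinite product formula for the orthogonal Chern–Simons partition function of
the unknot: for `0 < q < 1`, `t > 0`, and a summable family `z : ℤ → ℝ` with
`q^2 * max(t, t⁻¹) * |z_i| < 1` for all `i`, the family
`(((1+q^(2m) t z_i)(1-q^(2m) t⁻¹ z_i))/((1-q^(2m) t z_i)(1+q^(2m) t⁻¹ z_i)))^m`
indexed by `(m, i) ∈ ℕ₊ × ℤ` is multipliable and its product equals
`exp (∑_{k odd} (2/k) ((t^k - t^{-k})/(q^k - q^{-k})^2) (∑_i z_i^k))`. -/
theorem unknot_infinite_product_formula (q t : ℝ) (hq0 : 0 < q) (hq1 : q < 1)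
    (ht : 0 < t) (z : ℤ → ℝ) (hz : Summable fun i : ℤ => |z i|)
    (hzq : ∀ i : ℤ, q ^ 2 * max t t⁻¹ * |z i| < 1) :
    Multipliable (fun p : ℕ+ × ℤ =>
      (((1 + q ^ (2 * (p.1 : ℕ)) * t * z p.2) * (1 - q ^ (2 * (p.1 : ℕ)) * t⁻¹ * z p.2)) /
        ((1 - q ^ (2 * (p.1 : ℕ)) * t * z p.2) * (1 + q ^ (2 * (p.1 : ℕ)) * t⁻¹ * z p.2)))
        ^ (p.1 : ℕ)) ∧
    ∏' p : ℕ+ × ℤ,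
        (((1 + q ^ (2 * (p.1 : ℕ)) * t * z p.2) * (1 - q ^ (2 * (p.1 : ℕ)) * t⁻¹ * z p.2)) /
          ((1 - q ^ (2 * (p.1 : ℕ)) * t * z p.2) * (1 + q ^ (2 * (p.1 : ℕ)) * t⁻¹ * z p.2)))
          ^ (p.1 : ℕ) =
      Real.exp (∑' k : {k : ℕ // Odd k},
        (2 / ((k : ℕ) : ℝ)) *
          ((t ^ (k : ℕ) - t⁻¹ ^ (k : ℕ)) / (q ^ (k : ℕ) - q⁻¹ ^ (k : ℕ)) ^ 2) *
          (∑' i : ℤ, z i ^ (k : ℕ))) := by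
  have hq : |q| < 1 := abs_lt.mpr ⟨by linarith, hq1⟩
  have hg := summable_unknotLogTerm hq ht hz hzq
  have hprod := hasProd_exp_tsum_unknotLogTerm hq ht hz hzq
  refine ⟨hprod.multipliable, hprod.tprod_eq.trans (congrArg rexp ?_)⟩
  rw [hg.tsum_prod, ← hg.tsum_comm, tsum_subtype_odd]
  exact tsum_congr fun n => tsum_unknotLogTerm hq n (hg.prod_symm.prod_factor n)
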